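/- Let s_1, ..., s_n be pairwise distinct real scores and b ≥ 1. Define the causal selection function Sel(i) = Top-b(s_1,...,s_i) for each 1 ≤ i ≤ n. Then Sel satisfies both cache-problem axioms: (1) |Sel(i)| ≤ b for all i, and (2) Sel(m2) \ Sel(m1) ⊆ {m1+1,...,m2} for all 1 ≤ m1 < m2 ≤ n. -/

import Mathlib

open Finset

/-- `topB s b i` : the set of indices `j ∈ {1,…,i}` whose scores are among the
`min(b,i)` largest of `s 1, …, s i` (unique when scores are pairwise distinct). -/
noncomputable def topB (s : ℕ → ℝ) (b i : ℕ) : Finset ℕ :=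
  (Finset.Icc 1 i).filter fun j => ((Finset.Icc 1 i).filter fun k => s j < s k).card < b


lemma rank_lt_of_lt (s : ℕ → ℝ) (i : ℕ) {j j' : ℕ} (hj' : j' ∈ Finset.Icc 1 i)
    (h : s j < s j') :
    ((Finset.Icc 1 i).filter fun k => s j' < s k).card <
      ((Finset.Icc 1 i).filter fun k => s j < s k).card := by
  apply Finset.card_lt_card
  constructor
  · intro k hk
    simp only [Finset.mem_filter] at hk ⊢
    exact ⟨hk.1, h.trans hk.2⟩
  · intro hsub
    have := hsub (Finset.mem_filter.mpr ⟨hj', h⟩)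
    simp only [Finset.mem_filter] at this
    exact lt_irrefl _ this.2

/-- top-b causal-importance selection is a cache problem with budget `b`:
(1) each selection has size at most `b`; (2) any index in a later selection but not an
earlier one lies strictly between the two prefix lengths. -/
theorem topB_is_cache_problem (s : ℕ → ℝ) (n b : ℕ) (hb : 1 ≤ b)
    (hinj : Set.InjOn s (Set.Icc 1 n)) :
    (∀ i, 1 ≤ i → i ≤ n → (topB s b i).card ≤ b) ∧
    (∀ m1 m2, 1 ≤ m1 → m1 < m2 → m2 ≤ n →
      topB s b m2 \ topB s b m1 ⊆ Finset.Icc (m1 + 1) m2) := by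
  constructor
  · intro i hi1 hin
    have : (topB s b i).card ≤ (Finset.range b).card := by
      apply Finset.card_le_card_of_injOn
        (fun j => ((Finset.Icc 1 i).filter fun k => s j < s k).card)
      · intro j hj
        simp only [topB, Finset.mem_filter, Finset.mem_coe] at hj
        exact Finset.mem_range.mpr hj.2
      · intro j hj j' hj' heq
        simp only [topB, Finset.mem_filter, Finset.mem_coe] at hj hj'
        by_contra hne
        have hjn : j ∈ Set.Icc 1 n := by
          have := Finset.mem_Icc.mp hj.1; exact ⟨this.1, this.2.trans hin⟩
        have hj'n : j' ∈ Set.Icc 1 n := by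
          have := Finset.mem_Icc.mp hj'.1; exact ⟨this.1, this.2.trans hin⟩
        have hs : s j ≠ s j' := fun h => hne (hinj hjn hj'n h)
        dsimp only at heq
        rcases lt_or_gt_of_ne hs with h | h
        · exact (Nat.ne_of_lt (rank_lt_of_lt s i hj'.1 h)).symm heq
        · exact (Nat.ne_of_lt (rank_lt_of_lt s i hj.1 h)) heq
    simpa using this
  · intro m1 m2 hm1 hlt hm2 j hj
    rw [Finset.mem_sdiff] at hj
    obtain ⟨hj2, hj1⟩ := hj
    simp only [topB, Finset.mem_filter, Finset.mem_Icc] at hj2 hj1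
    rw [Finset.mem_Icc]
    refine ⟨?_, hj2.1.2⟩
    by_contra hle
    push_neg at hle
    apply hj1
    refine ⟨⟨hj2.1.1, Nat.lt_succ_iff.mp hle⟩, ?_⟩
    refine lt_of_le_of_lt ?_ hj2.2
    apply Finset.card_le_card
    intro k hk
    simp only [Finset.mem_filter, Finset.mem_Icc] at hk ⊢
    exact ⟨⟨hk.1.1, hk.1.2.trans hlt.le⟩, hk.2⟩
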